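/- arXiv:2212.03931 — 8 statements merged into one kernel-verified Lean document; each statement's English description precedes it below -/
import Mathlib

section
/- Let X be a finite set with default d ∈ X and D a collection of subsets of X each containing d, and let p_d : D → [0,1] be a default-choice data set. Then p_d is consistent with the random utility model if and only if there exists a probability distribution ν on the (finite) set of rationalizable deterministic choice functions on D such that for every A ∈ D, p_d(A) equals the ν-probability of the set of deterministic choice functions c with c(A) = d. -/
open scoped Classical

/-- `x` is the unique maximizer of `u` on the finite set `A`. -/
def IsUniqueMax {α : Type*} (u : α → ℝ) (A : Finset α) (x : α) : Prop :=
  x ∈ A ∧ ∀ y ∈ A, y ≠ x → u y < u x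

/-- The default-choice data set `p` on the collection `D` of choice sets (each containing
the default `d`) is consistent with the random utility model: there is a finite collection
of injective utility functions and a probability distribution over them such that `p A` is
the probability that `d` is the unique maximizer of the realized utility on `A`. -/
def ConsistentRUMDefault {α : Type*} (d : α) (D : Finset (Finset α))
    (p : Finset α → ℝ) : Prop :=
  ∃ (n : ℕ) (u : Fin n → α → ℝ) (ρ : Fin n → ℝ),
    (∀ i, Function.Injective (u i)) ∧
    (∀ i, 0 ≤ ρ i) ∧ (∑ i, ρ i = 1) ∧
    ∀ A ∈ D, p A = ∑ i ∈ Finset.univ.filter (fun i => IsUniqueMax (u i) A d), ρ i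

/-- A deterministic choice function on `D` is rationalizable if there is a strict linear
order on `α` such that on each `A ∈ D` it picks the greatest element of `A`. -/
def Rationalizable {α : Type*} (D : Finset (Finset α)) (c : Finset α → α) : Prop :=
  (∀ A ∈ D, c A ∈ A) ∧
    ∃ r : α → α → Prop, IsStrictTotalOrder α r ∧
      ∀ A ∈ D, ∀ y ∈ A, y ≠ c A → r (c A) y

/-!
An injective utility `u` induces a rationalizable choice function, its argmax, which picks `d` on
`A` exactly when `d` is the unique maximizer of `u` on `A`. Conversely, a strict linear order on the
finite set `X` is represented by an injective utility (the number of elements an alternative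
beats), whose unique maximizer on each `A ∈ D` is the choice of any choice function the order
rationalizes. Pushing a distribution on utilities forward along `u ↦ argmax u`, or reindexing a
distribution on choice functions by their utilities, turns one representation of `p_d` into the
other.
-/

open Finset Function

section

variable {α : Type*}

theorem IsUniqueMax.eq {u : α → ℝ} {A : Finset α} {x y : α}
    (hx : IsUniqueMax u A x) (hy : IsUniqueMax u A y) : x = y := by
  by_contra h
  exact lt_asymm (hx.2 y hy.1 (Ne.symm h)) (hy.2 x hx.1 h)

theorem IsUniqueMax.iff_eq {u : α → ℝ} {A : Finset α} {x y : α} (hx : IsUniqueMax u A x) :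
    IsUniqueMax u A y ↔ x = y :=
  ⟨hx.eq, fun h => h ▸ hx⟩

theorem exists_isUniqueMax_of_injective {u : α → ℝ} (hu : Injective u) {A : Finset α}
    (hA : A.Nonempty) : ∃ x, IsUniqueMax u A x := by
  obtain ⟨x, hx, hmax⟩ := A.exists_max_image u hA
  exact ⟨x, hx, fun y hy hne => (hmax y hy).lt_of_ne (hu.ne hne)⟩

noncomputable def maxChoice (u : α → ℝ) (d : α) (A : Finset α) : α :=
  if h : ∃ x, IsUniqueMax u A x then h.choose else d

theorem isUniqueMax_maxChoice {u : α → ℝ} (d : α) {A : Finset α}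
    (h : ∃ x, IsUniqueMax u A x) : IsUniqueMax u A (maxChoice u d A) := by
  rw [maxChoice, dif_pos h]
  exact h.choose_spec

theorem rationalizable_maxChoice {u : α → ℝ} (hu : Injective u) (d : α)
    {D : Finset (Finset α)} (hD : ∀ A ∈ D, A.Nonempty) : Rationalizable D (maxChoice u d) := by
  have hmax A (hA : A ∈ D) :=
    isUniqueMax_maxChoice d (exists_isUniqueMax_of_injective hu (hD A hA))
  exact ⟨fun A hA => (hmax A hA).1, (· > ·) on u, hu.isStrictTotalOrder_onFun (r := (· > ·)),
    fun A hA => (hmax A hA).2⟩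

theorem exists_injective_utility_of_isStrictTotalOrder [Fintype α] (r : α → α → Prop)
    [IsStrictTotalOrder α r] : ∃ u : α → ℝ, Injective u ∧ ∀ a b, r a b → u b < u a := by
  let u x : ℝ := #(univ.filter (r x))
  have hlt a b (hab : r a b) : u b < u a := by
    have hsub : univ.filter (r b) ⊂ univ.filter (r a) := by
      refine (ssubset_iff_of_subset fun z hz => ?_).2 ⟨b, ?_, ?_⟩
      · simp only [mem_filter, mem_univ, true_and] at hz ⊢
        exact _root_.trans hab hz
      · simpa using hab
      · simpa using irrefl b
    exact Nat.cast_lt.2 (card_lt_card hsub)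
  refine ⟨u, fun a b h => ?_, hlt⟩
  rcases trichotomous_of r a b with hab | hab | hab
  · exact absurd h (hlt a b hab).ne'
  · exact hab
  · exact absurd h (hlt b a hab).ne

theorem Rationalizable.exists_injective_utility [Fintype α] {D : Finset (Finset α)}
    {c : Finset α → α} (hc : Rationalizable D c) :
    ∃ u : α → ℝ, Injective u ∧ ∀ A ∈ D, IsUniqueMax u A (c A) := by
  obtain ⟨hmem, r, hr, hrc⟩ := hc
  obtain ⟨u, hu, hlt⟩ := exists_injective_utility_of_isStrictTotalOrder r
  exact ⟨u, hu, fun A hA => ⟨hmem A hA, fun y hy hne => hlt _ _ (hrc A hA y hy hne)⟩⟩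

theorem exists_distribution_map {ι κ : Type*} [Fintype ι] [Fintype κ] (g : ι → κ) {ρ : ι → ℝ}
    (hρ0 : ∀ i, 0 ≤ ρ i) (hρ1 : ∑ i, ρ i = 1) :
    ∃ ν : κ → ℝ, (∀ k, 0 ≤ ν k) ∧ ∑ k, ν k = 1 ∧
      ∀ (P : κ → Prop) [DecidablePred P],
        ∑ i ∈ univ.filter (fun i => P (g i)), ρ i = ∑ k ∈ univ.filter P, ν k := by
  refine ⟨fun k => ∑ i ∈ univ.filter (fun i => g i = k), ρ i,
    fun k => sum_nonneg fun i _ => hρ0 i, ?_, fun P _ => ?_⟩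
  · rw [sum_fiberwise_eq_sum_filter univ univ g ρ]
    simpa using hρ1
  · rw [sum_fiberwise_eq_sum_filter univ _ g ρ]
    simp

theorem consistentRUMDefault_of_fintype {ι : Type*} [Fintype ι] {d : α}
    {D : Finset (Finset α)} {p : Finset α → ℝ} (u : ι → α → ℝ) (ρ : ι → ℝ)
    (hu : ∀ i, Injective (u i)) (hρ0 : ∀ i, 0 ≤ ρ i) (hρ1 : ∑ i, ρ i = 1)
    (hp : ∀ A ∈ D, p A = ∑ i ∈ univ.filter (fun i => IsUniqueMax (u i) A d), ρ i) :
    ConsistentRUMDefault d D p := by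
  let e := (Fintype.equivFin ι).symm
  refine ⟨_, u ∘ e, ρ ∘ e, fun i => hu (e i), fun i => hρ0 (e i),
    (Equiv.sum_comp e ρ).trans hρ1, fun A hA => ?_⟩
  rw [hp A hA, sum_filter, sum_filter]
  exact (Equiv.sum_comp e _).symm

end

theorem mcfadden_richter_default_general {α : Type*} [Fintype α] [DecidableEq α]
    (d : α) (D : Finset (Finset α)) (hd : ∀ A ∈ D, d ∈ A)
    (p : Finset α → ℝ) :
    ConsistentRUMDefault d D p ↔
      ∃ ν : {c : Finset α → α // Rationalizable D c} → ℝ,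
        (∀ c, 0 ≤ ν c) ∧ (∑ c, ν c = 1) ∧
        ∀ A ∈ D,
          p A = ∑ c ∈ Finset.univ.filter
            (fun c : {c : Finset α → α // Rationalizable D c} => c.val A = d), ν c := by
  constructor
  · rintro ⟨n, u, ρ, hu, hρ0, hρ1, hp⟩
    let g i : {c : Finset α → α // Rationalizable D c} :=
      ⟨maxChoice (u i) d, rationalizable_maxChoice (hu i) d fun A hA => ⟨d, hd A hA⟩⟩
    obtain ⟨ν, hν0, hν1, hν⟩ := exists_distribution_map g hρ0 hρ1
    refine ⟨ν, hν0, hν1, fun A hA => ?_⟩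
    rw [hp A hA, ← hν]
    refine sum_congr (filter_congr fun i _ => ?_) fun _ _ => rfl
    exact (isUniqueMax_maxChoice d (exists_isUniqueMax_of_injective (hu i) ⟨d, hd A hA⟩)).iff_eq
  · rintro ⟨ν, hν0, hν1, hν⟩
    choose u hu hmax using fun c : {c : Finset α → α // Rationalizable D c} =>
      c.2.exists_injective_utility
    refine consistentRUMDefault_of_fintype u ν hu hν0 hν1 fun A hA => ?_
    rw [hν A hA]
    exact sum_congr (filter_congr fun c _ => (hmax c A hA).iff_eq.symm) fun _ _ => rfl

/-- the default-choice data set `p_d` is consistent with RUM iff there is a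
probability distribution `ν` on the (finite) set of rationalizable deterministic choice
functions on `D` such that for every `A ∈ D`, `p_d A` is the `ν`-probability of
`{c : c A = d}`. -/
theorem mcfadden_richter_default {α : Type*} [Fintype α] [DecidableEq α]
    (d : α) (D : Finset (Finset α)) (hd : ∀ A ∈ D, d ∈ A)
    (p : Finset α → ℝ) (hp : ∀ A ∈ D, p A ∈ Set.Icc (0 : ℝ) 1) :
    ConsistentRUMDefault d D p ↔
      ∃ ν : {c : Finset α → α // Rationalizable D c} → ℝ,
        (∀ c, 0 ≤ ν c) ∧ (∑ c, ν c = 1) ∧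
        ∀ A ∈ D,
          p A = ∑ c ∈ Finset.univ.filter
            (fun c : {c : Finset α → α // Rationalizable D c} => c.val A = d), ν c :=
  mcfadden_richter_default_general d D hd p
end

section
/- Let X be a finite set with default d ∈ X, let D be a collection of subsets of X each containing d with X ∈ D and D \ {X} nonempty, and let p_d : D → [0,1] be a default-choice data set whose restriction to D \ {X} is consistent with the random utility model. Then p_d^RUM(X) ≤ min over A ∈ D \ {X} of p_d(A); that is, the RUM bound is at most the Min bound. -/
/-! Under any utility, if the default is the unique maximizer on the grand set `X`, it is also
the unique maximizer on every `A ∋ d`. Hence every RUM-consistent completion gives `X` at most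
the mass it gives each `A ∈ D \ {X}`, and so does the supremum of such completions. -/

open scoped Classical

/-- The RUM bound `p_d^RUM(X)`: the supremum of all `x ∈ [0,1]` such that the data set
that agrees with `p` away from the grand set `X = Finset.univ` and takes value `x` at `X`
is consistent with RUM. -/
noncomputable def pdRUM {α : Type*} [Fintype α] [DecidableEq α]
    (d : α) (D : Finset (Finset α)) (p : Finset α → ℝ) : ℝ :=
  sSup {x : ℝ | x ∈ Set.Icc (0 : ℝ) 1 ∧
    ConsistentRUMDefault d D (Function.update p Finset.univ x)}

open Finset

theorem IsUniqueMax.mono {α : Type*} {u : α → ℝ} {A B : Finset α} {x : α}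
    (h : IsUniqueMax u B x) (hAB : A ⊆ B) (hx : x ∈ A) : IsUniqueMax u A x :=
  ⟨hx, fun y hy hyx => h.2 y (hAB hy) hyx⟩

theorem ConsistentRUMDefault.le_of_subset {α : Type*} {d : α} {D : Finset (Finset α)}
    {p : Finset α → ℝ} (h : ConsistentRUMDefault d D p) {A B : Finset α}
    (hA : A ∈ D) (hB : B ∈ D) (hdA : d ∈ A) (hAB : A ⊆ B) : p B ≤ p A := by
  obtain ⟨n, u, ρ, -, hρ, -, hp⟩ := h
  rw [hp A hA, hp B hB]
  refine sum_le_sum_of_subset_of_nonneg (fun i hi => ?_) (fun i _ _ => hρ i)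
  simp only [mem_filter, mem_univ, true_and] at hi ⊢
  exact hi.mono hAB hdA

theorem le_of_consistentRUMDefault_update_univ {α : Type*} [Fintype α] [DecidableEq α]
    {d : α} {D : Finset (Finset α)} {p : Finset α → ℝ} {x : ℝ}
    (h : ConsistentRUMDefault d D (Function.update p univ x)) (hX : univ ∈ D)
    {A : Finset α} (hA : A ∈ D) (hAX : A ≠ univ) (hdA : d ∈ A) : x ≤ p A := by
  simpa only [Function.update_self, Function.update_of_ne hAX] using
    h.le_of_subset hA hX hdA (subset_univ A)

theorem pdRUM_le_min_general {α : Type*} [Fintype α] [DecidableEq α]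
    (d : α) (D : Finset (Finset α)) (hd : ∀ A ∈ D, d ∈ A)
    (hX : Finset.univ ∈ D) (hne : (D.erase Finset.univ).Nonempty)
    (p : Finset α → ℝ) (hp : ∀ A ∈ D, p A ∈ Set.Icc (0 : ℝ) 1) :
    pdRUM d D p ≤ (D.erase Finset.univ).inf' hne p := by
  refine le_inf' hne p fun A hA => ?_
  obtain ⟨hAX, hAD⟩ := mem_erase.mp hA
  refine Real.sSup_le (fun x ⟨_, hx⟩ => ?_) (hp A hAD).1
  exact le_of_consistentRUMDefault_update_univ hx hX hAD hAX (hd A hAD)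

/-- the RUM bound is at most the Min bound, i.e. `p_d^RUM(X)` is at most the
minimum of `p_d A` over `A ∈ D \ {X}`. -/
theorem pdRUM_le_min {α : Type*} [Fintype α] [DecidableEq α]
    (d : α) (D : Finset (Finset α)) (hd : ∀ A ∈ D, d ∈ A)
    (hX : Finset.univ ∈ D) (hne : (D.erase Finset.univ).Nonempty)
    (p : Finset α → ℝ) (hp : ∀ A ∈ D, p A ∈ Set.Icc (0 : ℝ) 1)
    (hcons : ConsistentRUMDefault d (D.erase Finset.univ) p) :
    pdRUM d D p ≤ (D.erase Finset.univ).inf' hne p :=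
  pdRUM_le_min_general d D hd hX hne p hp
end

section
/- Let p be a real number with 0 < p < 1 such that 1 − (1 − p)^6 = 3/25. Then 1/50 < p < 9/400, and 1 − (1 − p)^24 = 1 − (22/25)^4 > 2/5. -/
/-!
With `q = 1 - p` the hypothesis says `q ^ 6 = 22/25`. Since `x ↦ x ^ 6` is strictly increasing
on `[0, ∞)` and `(391/400) ^ 6 < 22/25 < (49/50) ^ 6`, we get `391/400 < q < 49/50`; and
`q ^ 24 = (q ^ 6) ^ 4 = (22/25) ^ 4`.
-/

theorem one_sub_one_sub_pow_mul {R : Type*} [CommRing R] {p a : R} {n : ℕ}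
    (h : 1 - (1 - p) ^ n = a) (k : ℕ) :
    1 - (1 - p) ^ (n * k) = 1 - (1 - a) ^ k := by
  rw [pow_mul, ← h, sub_sub_cancel]

theorem jam_example_general (p : ℝ) (h1 : p < 1)
    (h : 1 - (1 - p) ^ 6 = 3 / 25) :
    (1 / 50 < p ∧ p < 9 / 400) ∧
      1 - (1 - p) ^ 24 = 1 - (22 / 25 : ℝ) ^ 4 ∧
      (2 / 5 : ℝ) < 1 - (22 / 25 : ℝ) ^ 4 := by
  have hq : (1 - p) ^ 6 = 22 / 25 := by linarith
  have hlt : 1 - p < 49 / 50 :=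
    lt_of_pow_lt_pow_left₀ 6 (by norm_num) (by rw [hq]; norm_num)
  have hgt : 391 / 400 < 1 - p :=
    lt_of_pow_lt_pow_left₀ 6 (by linarith) (by rw [hq]; norm_num)
  refine ⟨⟨by linarith, by linarith⟩, ?_, by norm_num⟩
  convert one_sub_one_sub_pow_mul h 4 using 3
  norm_num

/-- if `0 < p < 1` and `1 - (1-p)^6 = 3/25` (the jam-study active-choice
probability from six items), then `1/50 < p < 9/400`, and the active-choice probability
from twenty-four items satisfies `1 - (1-p)^24 = 1 - (22/25)^4 > 2/5`. -/
theorem jam_example (p : ℝ) (h0 : 0 < p) (h1 : p < 1)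
    (h : 1 - (1 - p) ^ 6 = 3 / 25) :
    (1 / 50 < p ∧ p < 9 / 400) ∧
      1 - (1 - p) ^ 24 = 1 - (22 / 25 : ℝ) ^ 4 ∧
      (2 / 5 : ℝ) < 1 - (22 / 25 : ℝ) ^ 4 :=
  jam_example_general p h1 h
end

section
/- Let {a, b, c, d} be a four-element set. There exists a probability distribution μ on the set of strict linear orders on {a, b, c, d} such that for every x ∈ {a, b, c}, the μ-probability of the event {≻ : x ≻ d} equals 1/5, and for every pair of distinct x, y ∈ {a, b, c}, the μ-probability of the event {≻ : x ≻ d or y ≻ d} equals 2/5. -/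
open scoped Classical

/-!
Mix four linear orders: with weight `2/5` an order ranking `d` first, and with weight `1/5`
each, for `x ∈ {a, b, c}`, an order ranking `x` first and `d` second. Under the order led by
`x`, the only element above `d` is `x`, so `y ≻ d` has mass `1/5` and `y ≻ d ∨ z ≻ d` has mass
`2/5` for distinct `y, z ∈ {a, b, c}`.
-/

open Finset Function

section Mixture

variable {ι β : Type*} [Fintype ι] [DecidableEq β]

/-- The weight function of the measure `∑ i, w i • δ (o i)` on `β`. -/
def mixture (o : ι → β) (w : ι → ℝ) (r : β) : ℝ :=
  ∑ i, if r = o i then w i else 0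

lemma mixture_nonneg {o : ι → β} {w : ι → ℝ} (hw : ∀ i, 0 ≤ w i) (r : β) :
    0 ≤ mixture o w r :=
  sum_nonneg fun i _ => by split_ifs <;> simp [hw i]

lemma sum_filter_mixture [Fintype β] (o : ι → β) (w : ι → ℝ) (P : β → Prop) [DecidablePred P] :
    ∑ r ∈ univ.filter P, mixture o w r = ∑ i, if P (o i) then w i else 0 := by
  unfold mixture
  rw [sum_comm]
  refine sum_congr rfl fun i _ => ?_
  simp only [sum_ite_eq', mem_filter, mem_univ, true_and]

lemma sum_mixture [Fintype β] (o : ι → β) (w : ι → ℝ) : ∑ r, mixture o w r = ∑ i, w i := by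
  simpa using sum_filter_mixture o w (fun _ => True)

end Mixture

section TopTwo

variable {α : Type*} [Fintype α] [DecidableEq α]

/-- Position (`0` = best) in a linear order ranking `x` first, `d` second and the remaining
elements after them in a fixed order. -/
noncomputable def topTwoPos (x d y : α) : ℕ :=
  if y = x then 0 else if y = d then 1 else Fintype.equivFin α y + 2

lemma topTwoPos_injective (x d : α) : Injective (topTwoPos x d) := by
  intro y z h
  unfold topTwoPos at h
  split_ifs at h <;>
    first
    | omega
    | exact (Fintype.equivFin α).injective (Fin.ext (by omega))
    | simp_all

/-- `(topTwoOrder x d).val y z` reads `y ≻ z`, i.e. `y` has the smaller position. -/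
noncomputable def topTwoOrder (x d : α) : {r : α → α → Prop // IsStrictTotalOrder α r} :=
  ⟨(· < ·) on topTwoPos x d, (topTwoPos_injective x d).isStrictTotalOrder_onFun _⟩

lemma topTwoOrder_above_iff (x d y : α) : (topTwoOrder x d).val y d ↔ y = x ∧ y ≠ d := by
  simp only [topTwoOrder, onFun, topTwoPos]
  split_ifs <;> grind

lemma sum_filter_mixture_topTwoOrder_above (w : α → ℝ) {y d : α} (hyd : y ≠ d) :
    ∑ r ∈ univ.filter (fun r : {r : α → α → Prop // IsStrictTotalOrder α r} => r.val y d),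
      mixture (topTwoOrder · d) w r = w y := by
  simp only [sum_filter_mixture, topTwoOrder_above_iff, hyd, ne_eq, not_false_eq_true, and_true,
    sum_ite_eq, mem_univ, if_true]

lemma sum_filter_mixture_topTwoOrder_above_or (w : α → ℝ) {y z d : α} (hyz : y ≠ z)
    (hyd : y ≠ d) (hzd : z ≠ d) :
    ∑ r ∈ univ.filter
        (fun r : {r : α → α → Prop // IsStrictTotalOrder α r} => r.val y d ∨ r.val z d),
      mixture (topTwoOrder · d) w r = w y + w z := by
  have split (x : α) : (if (y = x ∧ y ≠ d) ∨ (z = x ∧ z ≠ d) then w x else 0) =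
      (if y = x then w x else 0) + (if z = x then w x else 0) := by
    split_ifs <;> simp_all
  simp only [sum_filter_mixture, topTwoOrder_above_iff, split, sum_add_distrib, sum_ite_eq,
    mem_univ, if_true]

end TopTwo

theorem example_distribution_exists_general {α : Type*} [Fintype α] [DecidableEq α]
    (a b c d : α)
    (hab : a ≠ b) (hac : a ≠ c) (had : a ≠ d)
    (hbc : b ≠ c) (hbd : b ≠ d) (hcd : c ≠ d) :
    ∃ μ : {r : α → α → Prop // IsStrictTotalOrder α r} → ℝ,
      (∀ r, 0 ≤ μ r) ∧ (∑ r, μ r = 1) ∧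
      (∀ x ∈ ({a, b, c} : Finset α),
        (∑ r ∈ Finset.univ.filter
          (fun r : {r : α → α → Prop // IsStrictTotalOrder α r} => r.val x d), μ r) = 1 / 5) ∧
      (∀ x ∈ ({a, b, c} : Finset α), ∀ y ∈ ({a, b, c} : Finset α), x ≠ y →
        (∑ r ∈ Finset.univ.filter
          (fun r : {r : α → α → Prop // IsStrictTotalOrder α r} =>
            r.val x d ∨ r.val y d), μ r) = 2 / 5) := by
  set w : α → ℝ := fun x => (if d = x then 2 / 5 else 0) + (if a = x then 1 / 5 else 0) +
    (if b = x then 1 / 5 else 0) + (if c = x then 1 / 5 else 0) with hw_def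
  have hw_nonneg (x : α) : 0 ≤ w x := by positivity
  have hw_sum : ∑ x, w x = 1 := by
    simp only [hw_def, sum_add_distrib, sum_ite_eq, mem_univ, if_true]
    norm_num
  have hw_front : ∀ x ∈ ({a, b, c} : Finset α), w x = 1 / 5 ∧ x ≠ d := by
    simp [hw_def, hab, hac, had, hbc, hbd, hcd, hab.symm, hac.symm, had.symm, hbc.symm, hbd.symm,
      hcd.symm]
  refine ⟨mixture (topTwoOrder · d) w, mixture_nonneg hw_nonneg, by rw [sum_mixture, hw_sum],
    fun x hx => ?_, fun x hx y hy hxy => ?_⟩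
  · rw [sum_filter_mixture_topTwoOrder_above w (hw_front x hx).2, (hw_front x hx).1]
  · rw [sum_filter_mixture_topTwoOrder_above_or w hxy (hw_front x hx).2 (hw_front y hy).2,
      (hw_front x hx).1, (hw_front y hy).1]
    norm_num

/-- on a four-element set `{a, b, c, d}` there exists a probability
distribution `μ` on the set of strict linear orders (here `r x y` means `x ≻ y`) such that
for each `x ∈ {a,b,c}` the event `{≻ : x ≻ d}` has `μ`-probability `1/5`, and for each pair
of distinct `x, y ∈ {a,b,c}` the event `{≻ : x ≻ d or y ≻ d}` has `μ`-probability `2/5`. -/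
theorem example_distribution_exists {α : Type*} [Fintype α] [DecidableEq α]
    (a b c d : α)
    (hab : a ≠ b) (hac : a ≠ c) (had : a ≠ d)
    (hbc : b ≠ c) (hbd : b ≠ d) (hcd : c ≠ d)
    (huniv : (Finset.univ : Finset α) = {a, b, c, d}) :
    ∃ μ : {r : α → α → Prop // IsStrictTotalOrder α r} → ℝ,
      (∀ r, 0 ≤ μ r) ∧ (∑ r, μ r = 1) ∧
      (∀ x ∈ ({a, b, c} : Finset α),
        (∑ r ∈ Finset.univ.filter
          (fun r : {r : α → α → Prop // IsStrictTotalOrder α r} => r.val x d), μ r) = 1 / 5) ∧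
      (∀ x ∈ ({a, b, c} : Finset α), ∀ y ∈ ({a, b, c} : Finset α), x ≠ y →
        (∑ r ∈ Finset.univ.filter
          (fun r : {r : α → α → Prop // IsStrictTotalOrder α r} =>
            r.val x d ∨ r.val y d), μ r) = 2 / 5) :=
  example_distribution_exists_general a b c d hab hac had hbc hbd hcd
end

section
/- Let X = {a, b, c, d} with default d, and let D consist of all subsets of X containing d with at least two elements, together with X itself. Define the default-choice data set p_d by p_d({x, d}) = 4/5 for x ∈ {a, b, c}, p_d({x, y, d}) = 3/5 for distinct x, y ∈ {a, b, c}, and p_d(X) = 1/2. Then p_d satisfies monotonicity (p_d(A) ≥ p_d(B) whenever A, B ∈ D and A ⊆ B), but p_d is not consistent with the random utility model. -/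
open scoped Classical

/-!
Write `E_x` for the event that the default `d` beats `x`. For a menu `A ∋ d`, the default is
chosen from `A` exactly on the intersection of the `E_x` with `x ∈ A \ {d}`, so the choice
probabilities of `{x, d}`, `{x, y, d}` and `X` are the probabilities of single events `E_x`,
pairwise intersections and the triple intersection. Inclusion–exclusion then gives
`P(E_a ∪ E_b ∪ E_c) = 3 · 4/5 - 3 · 3/5 + 1/2 = 11/10 > 1`. Monotonicity holds because the
data depend only on the size of the menu, and decrease with it.
-/

open Finset

theorem Finset.sum_union_union {ι M : Type*} [DecidableEq ι] [AddCommGroup M] (f : ι → M)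
    (s t r : Finset ι) :
    ∑ i ∈ s ∪ t ∪ r, f i = ∑ i ∈ s, f i + ∑ i ∈ t, f i + ∑ i ∈ r, f i - ∑ i ∈ s ∩ t, f i
      - ∑ i ∈ s ∩ r, f i - ∑ i ∈ t ∩ r, f i + ∑ i ∈ s ∩ t ∩ r, f i := by
  have hst := sum_union_inter (s₁ := s) (s₂ := t) (f := f)
  have hstr := sum_union_inter (s₁ := s ∪ t) (s₂ := r) (f := f)
  have hsrtr := sum_union_inter (s₁ := s ∩ r) (s₂ := t ∩ r) (f := f)
  rw [union_inter_distrib_right] at hstr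
  rw [← inter_inter_distrib_right] at hsrtr
  rw [eq_sub_of_add_eq hstr, eq_sub_of_add_eq hsrtr, eq_sub_of_add_eq hst]
  abel

theorem isUniqueMax_union_iff {α : Type*} [DecidableEq α] {u : α → ℝ} {A B : Finset α} {d : α}
    (hA : d ∈ A) (hB : d ∈ B) :
    IsUniqueMax u (A ∪ B) d ↔ IsUniqueMax u A d ∧ IsUniqueMax u B d := by
  simp only [IsUniqueMax, mem_union, hA, hB, true_or, true_and, or_imp, forall_and]

theorem ConsistentRUMDefault.inclusion_exclusion_le_one {α : Type*} [DecidableEq α] {d : α}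
    {D : Finset (Finset α)} {p : Finset α → ℝ} (h : ConsistentRUMDefault d D p)
    {A B C : Finset α} (hdA : d ∈ A) (hdB : d ∈ B) (hdC : d ∈ C) (hA : A ∈ D) (hB : B ∈ D)
    (hC : C ∈ D) (hAB : A ∪ B ∈ D) (hAC : A ∪ C ∈ D) (hBC : B ∪ C ∈ D)
    (hABC : A ∪ B ∪ C ∈ D) :
    p A + p B + p C - p (A ∪ B) - p (A ∪ C) - p (B ∪ C) + p (A ∪ B ∪ C) ≤ 1 := by
  obtain ⟨n, u, ρ, -, hρ, hρ_sum, hp⟩ := h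
  set U : Finset α → Finset (Fin n) := fun S => univ.filter fun i => IsUniqueMax (u i) S d
  have hU : ∀ {S T : Finset α}, d ∈ S → d ∈ T → U (S ∪ T) = U S ∩ U T := fun hS hT => by
    simp only [U, isUniqueMax_union_iff hS hT, filter_and]
  have hpU : ∀ S ∈ D, p S = ∑ i ∈ U S, ρ i := hp
  have hdAB : d ∈ A ∪ B := mem_union_left B hdA
  rw [hpU A hA, hpU B hB, hpU C hC, hpU _ hAB, hpU _ hAC, hpU _ hBC, hpU _ hABC,
    hU hdA hdB, hU hdA hdC, hU hdB hdC, hU hdAB hdC, hU hdA hdB, ← sum_union_union]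
  exact (sum_le_univ_sum_of_nonneg hρ).trans hρ_sum.le

noncomputable def exampleDataOfCard (k : ℕ) : ℝ :=
  if k ≤ 2 then 4 / 5 else if k = 3 then 3 / 5 else 1 / 2

theorem antitone_exampleDataOfCard : Antitone exampleDataOfCard := by
  intro k l hkl
  simp only [exampleDataOfCard]
  split_ifs <;> first | omega | norm_num

theorem eq_exampleDataOfCard_card {α : Type*} [Fintype α] [DecidableEq α] {a b c d : α}
    (hab : a ≠ b) (hac : a ≠ c) (had : a ≠ d) (hbc : b ≠ c) (hbd : b ≠ d) (hcd : c ≠ d)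
    (huniv : (univ : Finset α) = {a, b, c, d}) {p : Finset α → ℝ}
    (h2 : ∀ x ∈ ({a, b, c} : Finset α), p {x, d} = 4 / 5)
    (h3 : ∀ x ∈ ({a, b, c} : Finset α), ∀ y ∈ ({a, b, c} : Finset α), x ≠ y →
      p {x, y, d} = 3 / 5)
    (hX : p univ = 1 / 2) {A : Finset α} (hdA : d ∈ A) (hA : 2 ≤ #A) :
    p A = exampleDataOfCard #A := by
  have hA_eq : A = ({a, b, c, d} : Finset α).filter (· ∈ A) := by rw [← huniv, filter_univ_mem]
  rw [huniv] at hX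
  by_cases ha : a ∈ A <;> by_cases hb : b ∈ A <;> by_cases hc : c ∈ A <;>
    rw [hA_eq] at hA ⊢ <;>
    simp [filter_insert, filter_singleton, ha, hb, hc, hdA, h2, h3, hX, exampleDataOfCard, hab, hac,
      had, hbc, hbd, hcd] at hA ⊢

/-- on `X = {a, b, c, d}` with default `d`, let `D` be all subsets of `X`
containing `d` with at least two elements (this includes `X` itself). The default-choice
data set with `p_d({x,d}) = 4/5`, `p_d({x,y,d}) = 3/5` and `p_d(X) = 1/2` satisfies
monotonicity but is not consistent with the random utility model. -/
theorem monotone_not_rum {α : Type*} [Fintype α] [DecidableEq α]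
    (a b c d : α)
    (hab : a ≠ b) (hac : a ≠ c) (had : a ≠ d)
    (hbc : b ≠ c) (hbd : b ≠ d) (hcd : c ≠ d)
    (huniv : (Finset.univ : Finset α) = {a, b, c, d})
    (D : Finset (Finset α))
    (hD : D = Finset.univ.filter (fun A : Finset α => d ∈ A ∧ 2 ≤ A.card))
    (p : Finset α → ℝ)
    (h2 : ∀ x ∈ ({a, b, c} : Finset α), p {x, d} = 4 / 5)
    (h3 : ∀ x ∈ ({a, b, c} : Finset α), ∀ y ∈ ({a, b, c} : Finset α), x ≠ y →
      p {x, y, d} = 3 / 5)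
    (hX : p Finset.univ = 1 / 2) :
    (∀ A ∈ D, ∀ B ∈ D, A ⊆ B → p B ≤ p A) ∧ ¬ ConsistentRUMDefault d D p := by
  have hp : ∀ A ∈ D, p A = exampleDataOfCard #A := fun A hA => by
    rw [hD, mem_filter] at hA
    exact eq_exampleDataOfCard_card hab hac had hbc hbd hcd huniv h2 h3 hX hA.2.1 hA.2.2
  refine ⟨fun A hA B hB hAB => ?_, fun hrum => ?_⟩
  · rw [hp A hA, hp B hB]
    exact antitone_exampleDataOfCard (card_le_card hAB)
  have hunion : ∀ {x y : α}, ({x, d} ∪ {y, d} : Finset α) = {x, y, d} := by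
    intro x y; ext; simp only [mem_union, mem_insert, mem_singleton]; tauto
  have hunion3 : ({a, d} ∪ {b, d} ∪ {c, d} : Finset α) = univ := by
    rw [hunion, huniv]; ext; simp only [mem_union, mem_insert, mem_singleton]; tauto
  have key := hrum.inclusion_exclusion_le_one (A := {a, d}) (B := {b, d}) (C := {c, d})
    (by simp) (by simp) (by simp) ?_ ?_ ?_ ?_ ?_ ?_ ?_
  · rw [hunion3, hunion, hunion, hunion, h2 a (by simp), h2 b (by simp), h2 c (by simp),
      h3 a (by simp) b (by simp) hab, h3 a (by simp) c (by simp) hac,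
      h3 b (by simp) c (by simp) hbc, hX] at key
    norm_num at key
  all_goals simp [hD, hunion, hab, hac, had, hbc, hbd, hcd, hac.symm, hbc.symm]
end

section
/- Let Ω be a symmetric positive definite m × m real matrix with induced inner product ⟨x, y⟩_Ω = xᵀΩy, let C̃ ⊆ ℝ^m be a closed convex cone, let π ∈ ℝ^m, and let η̃ be the point of C̃ minimizing ⟨π − η, π − η⟩_Ω over η ∈ C̃. If a ∈ ℝ^m satisfies ⟨π − η̃, a − η̃⟩_Ω > 0, then the infimum of ⟨π − η, π − η⟩_Ω over η in the convex cone generated by C̃ ∪ {a} is strictly smaller than ⟨π − η̃, π − η̃⟩_Ω. -/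
/-
Moving from `η` towards `a` is a descent direction: along the segment `η + t (a - η)`, which
stays in the cone generated by `C ∪ {a}`, the squared `Ω`-distance to `π` is the quadratic
`‖π - η‖² - 2 t ⟨π - η, a - η⟩ + t² ‖a - η‖²`, whose slope at `t = 0` is negative.
-/

open Matrix

/-- The inner product on `ℝ^m` induced by the positive definite matrix `Ω`. -/
def innOmega {m : ℕ} (Ω : Matrix (Fin m) (Fin m) ℝ) (x y : Fin m → ℝ) : ℝ :=
  x ⬝ᵥ Ω.mulVec y

/-- The convex cone generated by a set `S ⊆ ℝ^m`: all finite nonnegative linear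
combinations of elements of `S`. -/
def genCone {m : ℕ} (S : Set (Fin m → ℝ)) : Set (Fin m → ℝ) :=
  {x | ∃ (n : ℕ) (v : Fin n → Fin m → ℝ) (t : Fin n → ℝ),
    (∀ i, v i ∈ S) ∧ (∀ i, 0 ≤ t i) ∧ x = ∑ i, t i • v i}

section innOmega

variable {m : ℕ} {Ω : Matrix (Fin m) (Fin m) ℝ}

lemma innOmega_self_nonneg (hΩ : Ω.PosSemidef) (x : Fin m → ℝ) : 0 ≤ innOmega Ω x x :=
  hΩ.dotProduct_mulVec_nonneg x

lemma innOmega_sub_smul_self (hΩ : Ω.IsSymm) (u w : Fin m → ℝ) (t : ℝ) :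
    innOmega Ω (u - t • w) (u - t • w) =
      innOmega Ω u u - 2 * t * innOmega Ω u w + t ^ 2 * innOmega Ω w w := by
  have hwu : w ⬝ᵥ Ω *ᵥ u = u ⬝ᵥ Ω *ᵥ w := by
    rw [dotProduct_mulVec, ← mulVec_transpose, hΩ.eq, dotProduct_comm]
  simp only [innOmega, mulVec_sub, mulVec_smul, dotProduct_sub, sub_dotProduct,
    dotProduct_smul, smul_dotProduct, smul_eq_mul, hwu]
  ring

lemma exists_mem_Ioc_innOmega_sub_smul_lt (hΩ : Ω.PosSemidef) {u w : Fin m → ℝ}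
    (huw : 0 < innOmega Ω u w) :
    ∃ t ∈ Set.Ioc (0 : ℝ) 1, innOmega Ω (u - t • w) (u - t • w) < innOmega Ω u u := by
  set b := innOmega Ω u w
  set c := innOmega Ω w w
  have hc : 0 ≤ c := innOmega_self_nonneg hΩ w
  have hbc : 0 < b + c := by linarith
  -- With `t = b / (b + c)` we get `t c ≤ b`, so `-2 t b + t² c ≤ -t b < 0`.
  refine ⟨b / (b + c), ⟨by positivity, (div_le_one hbc).2 (by linarith)⟩, ?_⟩
  rw [innOmega_sub_smul_self (isHermitian_iff_isSymm.mp hΩ.isHermitian)]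
  have htc : b / (b + c) * c ≤ b := by
    rw [div_mul_eq_mul_div, div_le_iff₀ hbc]
    nlinarith
  nlinarith [div_pos huw hbc]

end innOmega

lemma smul_add_smul_mem_genCone {m : ℕ} {S : Set (Fin m → ℝ)} {x y : Fin m → ℝ}
    (hx : x ∈ S) (hy : y ∈ S) {s t : ℝ} (hs : 0 ≤ s) (ht : 0 ≤ t) :
    s • x + t • y ∈ genCone S :=
  ⟨2, ![x, y], ![s, t], by simp [Fin.forall_fin_two, hx, hy], by simp [Fin.forall_fin_two, hs, ht],
    by simp [Fin.sum_univ_two]⟩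

theorem pricing_improvement_general {m : ℕ}
    (Ω : Matrix (Fin m) (Fin m) ℝ) (hpos : Ω.PosDef)
    (C : Set (Fin m → ℝ))
    (π η : Fin m → ℝ) (hη : η ∈ C)
    (a : Fin m → ℝ) (ha : 0 < innOmega Ω (π - η) (a - η)) :
    sInf {q : ℝ | ∃ x ∈ genCone (C ∪ {a}), q = innOmega Ω (π - x) (π - x)} <
      innOmega Ω (π - η) (π - η) := by
  obtain ⟨t, ⟨ht0, ht1⟩, hlt⟩ := exists_mem_Ioc_innOmega_sub_smul_lt hpos.posSemidef ha
  have hmem : (1 - t) • η + t • a ∈ genCone (C ∪ {a}) :=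
    smul_add_smul_mem_genCone (Or.inl hη) (Or.inr rfl) (sub_nonneg.2 ht1) ht0.le
  have hdiff : π - ((1 - t) • η + t • a) = (π - η) - t • (a - η) := by
    simp only [sub_smul, one_smul, smul_sub]
    abel
  have hbdd : BddBelow {q : ℝ | ∃ x ∈ genCone (C ∪ {a}), q = innOmega Ω (π - x) (π - x)} :=
    ⟨0, by rintro q ⟨x, -, rfl⟩; exact innOmega_self_nonneg hpos.posSemidef _⟩
  refine (csInf_le hbdd ⟨_, hmem, rfl⟩).trans_lt ?_
  rwa [hdiff]

/-- if `η` is the `Ω`-projection of `π` onto a closed convex cone `C` and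
`⟨π − η, a − η⟩_Ω > 0`, then adjoining `a` to the cone strictly reduces the minimal
`Ω`-distance squared from `π`. -/
theorem pricing_improvement {m : ℕ}
    (Ω : Matrix (Fin m) (Fin m) ℝ) (hsym : Ω.IsSymm) (hpos : Ω.PosDef)
    (C : Set (Fin m → ℝ)) (hclosed : IsClosed C) (hconv : Convex ℝ C)
    (hcone : ∀ x ∈ C, ∀ t : ℝ, 0 ≤ t → t • x ∈ C)
    (π η : Fin m → ℝ) (hη : η ∈ C)
    (hmin : ∀ c ∈ C, innOmega Ω (π - η) (π - η) ≤ innOmega Ω (π - c) (π - c))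
    (a : Fin m → ℝ) (ha : 0 < innOmega Ω (π - η) (a - η)) :
    sInf {q : ℝ | ∃ x ∈ genCone (C ∪ {a}), q = innOmega Ω (π - x) (π - x)} <
      innOmega Ω (π - η) (π - η) :=
  pricing_improvement_general Ω hpos C π η hη a ha
end

section
/- Let Ω be a symmetric positive definite m × m real matrix with induced inner product ⟨x, y⟩_Ω = xᵀΩy, let S ⊆ ℝ^m be a finite set, let C be the convex cone generated by S, and let C̃ ⊆ C be a closed convex cone. Let π ∈ ℝ^m and let η̃ be the point of C̃ minimizing ⟨π − η, π − η⟩_Ω over η ∈ C̃. If ⟨π − η̃, a − η̃⟩_Ω ≤ 0 for every a ∈ S, then η̃ also minimizes ⟨π − η, π − η⟩_Ω over η ∈ C; in particular, the minimum of the Ω-distance squared from π over C equals its minimum over C̃. -/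
/-!
Minimality of `η` along the ray `{t • η | t ≥ 0} ⊆ Ct` forces `⟨π - η, η⟩_Ω = 0`. The pricing
condition then reads `⟨π - η, a⟩_Ω ≤ 0` for every generator `a ∈ S`, hence `⟨π - η, c - η⟩_Ω ≤ 0`
for every `c` in the cone generated by `S`, and expanding `⟨π - c, π - c⟩_Ω` around `η` shows
that `η` is also the `Ω`-projection of `π` onto that cone.
-/

open Matrix

lemma eq_zero_of_forall_two_mul_le_sq_mul {a b : ℝ}
    (h : ∀ s : ℝ, -1 ≤ s → 2 * s * b ≤ s ^ 2 * a) : b = 0 := by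
  by_contra hb
  have hb₀ : 0 < |b| := abs_pos.2 hb
  have ha : 0 ≤ a := by linarith [h 1 (by norm_num), h (-1) (by norm_num)]
  -- `s ∈ (0, 1]` is small enough that `s * a ≤ |b|`, while `h (± s)` gives `2 * |b| ≤ s * a`.
  set s := |b| / (a + |b|)
  have hs₀ : 0 < s := by positivity
  have hs₁ : s ≤ 1 := div_le_one_of_le₀ (by linarith) (by positivity)
  have hsa : s * a ≤ |b| := by
    rw [div_mul_eq_mul_div, div_le_iff₀ (by positivity)]
    nlinarith
  have hs := h s (by linarith)
  have hs' := h (-s) (by linarith)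
  have habs : 2 * |b| ≤ s * a := by
    rcases abs_choice b with hb' | hb' <;> rw [hb'] <;> nlinarith
  linarith

namespace LinearMap.BilinForm

variable {E : Type*} [AddCommGroup E] [Module ℝ E] {B : LinearMap.BilinForm ℝ E}

lemma IsSymm.apply_sub_sub (hB : B.IsSymm) (x y : E) :
    B (x - y) (x - y) = B x x - 2 * B x y + B y y := by
  have := hB.eq y x
  simp only [map_sub, LinearMap.sub_apply] at this ⊢
  linarith

lemma IsPosSemidef.apply_self_le_apply_sub_sub (hB : B.IsPosSemidef) {x y : E}
    (hxy : B x y ≤ 0) : B x x ≤ B (x - y) (x - y) := by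
  rw [hB.isSymm.apply_sub_sub]
  linarith [hB.isNonneg.nonneg y]

lemma IsSymm.apply_sub_self_eq_zero_of_forall_le (hB : B.IsSymm) {p e : E}
    (hmin : ∀ t : ℝ, 0 ≤ t → B (p - e) (p - e) ≤ B (p - t • e) (p - t • e)) :
    B (p - e) e = 0 := by
  refine eq_zero_of_forall_two_mul_le_sq_mul (a := B e e) fun s hs => ?_
  have hmin' := hmin (s + 1) (by linarith)
  have hsplit : p - (s + 1) • e = (p - e) - s • e := by rw [add_smul, one_smul]; abel
  rw [hsplit, hB.apply_sub_sub (p - e) (s • e), smul_left, smul_right, smul_right] at hmin'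
  nlinarith

end LinearMap.BilinForm

lemma map_nonpos_of_mem_genCone {m : ℕ} {S : Set (Fin m → ℝ)} (f : (Fin m → ℝ) →ₗ[ℝ] ℝ)
    (hf : ∀ a ∈ S, f a ≤ 0) {c : Fin m → ℝ} (hc : c ∈ genCone S) : f c ≤ 0 := by
  obtain ⟨n, v, t, hv, ht, rfl⟩ := hc
  simp only [map_sum, map_smul, smul_eq_mul]
  exact Finset.sum_nonpos fun i _ => mul_nonpos_of_nonneg_of_nonpos (ht i) (hf _ (hv i))

lemma Matrix.PosSemidef.isPosSemidef_toBilin' {n : Type*} [Fintype n] [DecidableEq n]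
    {M : Matrix n n ℝ} (hM : M.PosSemidef) : M.toBilin'.IsPosSemidef where
  isSymm := Matrix.isSymm_toBilin'_iff_isSymm.2 (Matrix.isHermitian_iff_isSymm.1 hM.isHermitian)
  nonneg x := by
    rw [Matrix.toBilin'_apply']
    exact hM.dotProduct_mulVec_nonneg x

lemma innOmega_eq_toBilin' {m : ℕ} (Ω : Matrix (Fin m) (Fin m) ℝ) (x y : Fin m → ℝ) :
    innOmega Ω x y = Ω.toBilin' x y :=
  (Matrix.toBilin'_apply' Ω x y).symm

theorem pricing_termination_general {m : ℕ}
    (Ω : Matrix (Fin m) (Fin m) ℝ) (hpos : Ω.PosDef)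
    (S : Set (Fin m → ℝ))
    (Ct : Set (Fin m → ℝ)) (hsub : Ct ⊆ genCone S)
    (hcone : ∀ x ∈ Ct, ∀ t : ℝ, 0 ≤ t → t • x ∈ Ct)
    (π η : Fin m → ℝ) (hη : η ∈ Ct)
    (hmin : ∀ c ∈ Ct, innOmega Ω (π - η) (π - η) ≤ innOmega Ω (π - c) (π - c))
    (hprice : ∀ a ∈ S, innOmega Ω (π - η) (a - η) ≤ 0) :
    (∀ c ∈ genCone S, innOmega Ω (π - η) (π - η) ≤ innOmega Ω (π - c) (π - c)) ∧
      sInf {q : ℝ | ∃ x ∈ genCone S, q = innOmega Ω (π - x) (π - x)} =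
        sInf {q : ℝ | ∃ x ∈ Ct, q = innOmega Ω (π - x) (π - x)} := by
  simp only [innOmega_eq_toBilin'] at hmin hprice ⊢
  set B := Ω.toBilin'
  have hB : B.IsPosSemidef := hpos.posSemidef.isPosSemidef_toBilin'
  have hortho : B (π - η) η = 0 :=
    hB.isSymm.apply_sub_self_eq_zero_of_forall_le fun t ht => hmin _ (hcone η hη t ht)
  have hopt : ∀ c ∈ genCone S, B (π - η) (π - η) ≤ B (π - c) (π - c) := by
    intro c hc
    have hcross : B (π - η) (c - η) ≤ 0 := by
      rw [(B (π - η)).map_sub, hortho, sub_zero]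
      refine map_nonpos_of_mem_genCone (B (π - η)) (fun a ha => ?_) hc
      simpa only [(B (π - η)).map_sub, hortho, sub_zero] using hprice a ha
    simpa only [sub_sub_sub_cancel_right] using hB.apply_self_le_apply_sub_sub hcross
  have hleast : ∀ s ⊆ genCone S, η ∈ s →
      IsLeast {q | ∃ x ∈ s, q = B (π - x) (π - x)} (B (π - η) (π - η)) :=
    fun s hs hηs => ⟨⟨η, hηs, rfl⟩, by rintro _ ⟨x, hx, rfl⟩; exact hopt x (hs hx)⟩
  exact ⟨hopt, (hleast _ subset_rfl (hsub hη)).csInf_eq.trans (hleast Ct hsub hη).csInf_eq.symm⟩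

/-- let `S` be finite, `C = genCone S`, and let `Ct ⊆ C` be a closed convex
cone with `η` the `Ω`-projection of `π` onto `Ct`. If `⟨π − η, a − η⟩_Ω ≤ 0` for every
`a ∈ S`, then `η` also minimizes the `Ω`-distance squared from `π` over `C`; in particular
the minimum over `C` equals the minimum over `Ct`. -/
theorem pricing_termination {m : ℕ}
    (Ω : Matrix (Fin m) (Fin m) ℝ) (hsym : Ω.IsSymm) (hpos : Ω.PosDef)
    (S : Set (Fin m → ℝ)) (hS : S.Finite)
    (Ct : Set (Fin m → ℝ)) (hsub : Ct ⊆ genCone S)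
    (hclosed : IsClosed Ct) (hconv : Convex ℝ Ct)
    (hcone : ∀ x ∈ Ct, ∀ t : ℝ, 0 ≤ t → t • x ∈ Ct)
    (π η : Fin m → ℝ) (hη : η ∈ Ct)
    (hmin : ∀ c ∈ Ct, innOmega Ω (π - η) (π - η) ≤ innOmega Ω (π - c) (π - c))
    (hprice : ∀ a ∈ S, innOmega Ω (π - η) (a - η) ≤ 0) :
    (∀ c ∈ genCone S, innOmega Ω (π - η) (π - η) ≤ innOmega Ω (π - c) (π - c)) ∧
      sInf {q : ℝ | ∃ x ∈ genCone S, q = innOmega Ω (π - x) (π - x)} =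
        sInf {q : ℝ | ∃ x ∈ Ct, q = innOmega Ω (π - x) (π - x)} :=
  pricing_termination_general Ω hpos S Ct hsub hcone π η hη hmin hprice
end

section
/- Let Ω be a symmetric positive definite m × m real matrix, let M be an m × H real matrix, and let π ∈ ℝ^m. Then the minimum over ν ≥ 0 of (π − Mν)ᵀ Ω (π − Mν) is attained, and moreover it is attained at some ν* ≥ 0 having at most m nonzero coordinates. -/
/-!
Conic Carathéodory: if the columns of `M` on the support of `ν ≥ 0` are linearly dependent, moving
`ν` along a kernel vector supported there until a coordinate hits zero keeps `Mν` and `ν ≥ 0` and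
shrinks the support. So every point of the cone `{Mν : ν ≥ 0}` is a nonnegative combination of
linearly independent columns, hence of at most `m` of them. The cone is therefore a finite union of
images of closed orthants under injective linear maps, so it is closed. A positive definite
quadratic form is coercive, hence attains its minimum on this closed cone, and a Carathéodory
representation of the minimizer is a sparse minimizer.
-/

open Matrix Function Filter
open scoped Classical

/-- For `A = M.mulVecLin` this is the matrix of the columns of `M` indexed by `s`; its injectivity
is the linear independence of those columns. -/
noncomputable def LinearMap.restrictSupport {ι R E : Type*} [Semiring R] [AddCommMonoid E]
    [Module R E] (A : (ι → R) →ₗ[R] E) (s : Set ι) : (s → R) →ₗ[R] E :=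
  A ∘ₗ ExtendByZero.linearMap R Subtype.val

theorem LinearMap.restrictSupport_apply_val {ι R E : Type*} [Semiring R] [AddCommMonoid E]
    [Module R E] (A : (ι → R) →ₗ[R] E) {s : Set ι} {ν : ι → R} (hν : support ν ⊆ s) :
    A.restrictSupport s (fun i => ν i) = A ν := by
  refine congrArg A (funext fun i => ?_)
  rw [ExtendByZero.linearMap_apply]
  by_cases hi : i ∈ s
  · exact Subtype.val_injective.extend_apply _ _ ⟨i, hi⟩
  · rw [extend_apply' _ _ _ fun ⟨j, hj⟩ => hi (hj ▸ j.2)]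
    exact (notMem_support.1 fun h => hi (hν h)).symm

section ConicCaratheodory

variable {ι 𝕜 E : Type*} [Fintype ι] [Field 𝕜] [LinearOrder 𝕜] [IsStrictOrderedRing 𝕜]
  [AddCommGroup E] [Module 𝕜 E]

theorem exists_nonneg_sub_smul_support_ssubset_of_pos {ν c : ι → 𝕜} (hν : 0 ≤ ν)
    (hc : support c ⊆ support ν) {j : ι} (hj : 0 < c j) :
    ∃ t : 𝕜, 0 ≤ ν - t • c ∧ support (ν - t • c) ⊂ support ν := by
  -- the ratio test of the simplex method: `t = ν k / c k` is minimal among the `c k > 0`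
  obtain ⟨k, hk, hmin⟩ := (Finset.univ.filter fun i => 0 < c i).exists_min_image
    (fun i => ν i / c i) ⟨j, by simpa using hj⟩
  simp only [Finset.mem_filter, Finset.mem_univ, true_and] at hk hmin
  have ht : 0 ≤ ν k / c k := div_nonneg (hν k) hk.le
  refine ⟨ν k / c k, fun i => ?_, ?_⟩
  · rcases le_or_gt (c i) 0 with hci | hci
    · simpa using le_trans (mul_nonpos_of_nonneg_of_nonpos ht hci) (hν i)
    · simpa using (le_div_iff₀ hci).1 (hmin i hci)
  · refine Set.ssubset_iff_of_subset (fun i hi => ?_) |>.2 ⟨k, hc hk.ne', ?_⟩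
    · by_contra hνi
      have hci : c i = 0 := notMem_support.1 fun h => hνi (hc h)
      simp_all
    · simp [div_mul_cancel₀ _ hk.ne']

theorem exists_nonneg_sub_smul_support_ssubset {ν c : ι → 𝕜} (hν : 0 ≤ ν)
    (hc : support c ⊆ support ν) (hc0 : c ≠ 0) :
    ∃ t : 𝕜, 0 ≤ ν - t • c ∧ support (ν - t • c) ⊂ support ν := by
  obtain ⟨j, hj⟩ := Function.ne_iff.1 hc0
  rcases (hj : c j ≠ 0).lt_or_gt with hneg | hpos
  · obtain ⟨t, ht⟩ := exists_nonneg_sub_smul_support_ssubset_of_pos (c := -c) hν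
      (by rwa [support_neg]) (neg_pos.2 hneg : 0 < (-c) j)
    exact ⟨-t, by rwa [smul_neg, ← neg_smul] at ht⟩
  · exact exists_nonneg_sub_smul_support_ssubset_of_pos hν hc hpos

theorem LinearMap.exists_nonneg_injective_restrictSupport (A : (ι → 𝕜) →ₗ[𝕜] E) {ν : ι → 𝕜}
    (hν : 0 ≤ ν) :
    ∃ ν' : ι → 𝕜, 0 ≤ ν' ∧ A ν' = A ν ∧ Injective (A.restrictSupport (support ν')) := by
  -- a nonnegative representation of `A ν` whose support is minimal for inclusion
  obtain ⟨ν₀, ⟨hν₀, hAν₀⟩, hmin⟩ := (InvImage.wf support wellFounded_lt).has_min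
    {ν' | 0 ≤ ν' ∧ A ν' = A ν} ⟨ν, hν, rfl⟩
  refine ⟨ν₀, hν₀, hAν₀, ?_⟩
  by_contra hinj
  obtain ⟨g, hg, hg0⟩ : ∃ g, A.restrictSupport (support ν₀) g = 0 ∧ g ≠ 0 := by
    simpa [injective_iff_map_eq_zero] using hinj
  set c : ι → 𝕜 := extend Subtype.val g 0
  have hc : support c ⊆ support ν₀ := fun i hi => by
    by_contra hν₀i
    exact hi (extend_apply' _ _ _ fun ⟨j, hj⟩ => hν₀i (hj ▸ j.2))
  have hc0 : c ≠ 0 := by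
    obtain ⟨j, hj⟩ := Function.ne_iff.1 hg0
    exact Function.ne_iff.2 ⟨j, by simpa [c, Subtype.val_injective.extend_apply] using hj⟩
  obtain ⟨t, ht, hsub⟩ := exists_nonneg_sub_smul_support_ssubset hν₀ hc hc0
  refine hmin _ ⟨ht, ?_⟩ hsub
  rw [map_sub, map_smul, show A c = 0 from hg, smul_zero, sub_zero, hAν₀]

theorem LinearMap.image_Ici_zero_eq_iUnion (A : (ι → 𝕜) →ₗ[𝕜] E) :
    A '' Set.Ici 0 =
      ⋃ (s : Set ι) (_ : Injective (A.restrictSupport s)), A.restrictSupport s '' Set.Ici 0 := by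
  ext x
  simp only [Set.mem_image, Set.mem_iUnion]
  constructor
  · rintro ⟨ν, hν, rfl⟩
    obtain ⟨ν', hν', hAν', hinj⟩ := A.exists_nonneg_injective_restrictSupport hν
    exact ⟨support ν', hinj, fun i => ν' i, fun i => hν' i,
      by rw [A.restrictSupport_apply_val subset_rfl, hAν']⟩
  · rintro ⟨s, -, μ, hμ, rfl⟩
    exact ⟨extend Subtype.val μ 0, extend_nonneg hμ le_rfl, rfl⟩

end ConicCaratheodory

theorem LinearMap.isClosed_image_Ici_zero {ι E : Type*} [Fintype ι] [AddCommGroup E]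
    [Module ℝ E] [TopologicalSpace E] [IsTopologicalAddGroup E] [ContinuousSMul ℝ E] [T2Space E]
    (A : (ι → ℝ) →ₗ[ℝ] E) : IsClosed (A '' Set.Ici 0) := by
  rw [A.image_Ici_zero_eq_iUnion]
  refine isClosed_iUnion_of_finite fun s => isClosed_iUnion_of_finite fun hinj => ?_
  exact (LinearMap.isClosedEmbedding_of_injective (LinearMap.ker_eq_bot.2 hinj)).isClosedMap _
    isClosed_Ici

theorem Matrix.PosDef.exists_pos_mul_sq_norm_le {n : Type*} [Fintype n] {Ω : Matrix n n ℝ}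
    (hΩ : Ω.PosDef) : ∃ c > 0, ∀ v : n → ℝ, c * ‖v‖ ^ 2 ≤ v ⬝ᵥ Ω *ᵥ v := by
  have hq : Continuous fun v : n → ℝ => v ⬝ᵥ Ω *ᵥ v := by fun_prop
  cases isEmpty_or_nonempty n
  · exact ⟨1, one_pos, fun v => by simp [Subsingleton.elim v 0]⟩
  obtain ⟨u, hu, hmin⟩ := (isCompact_sphere (0 : n → ℝ) 1).exists_isMinOn
    (NormedSpace.sphere_nonempty.2 zero_le_one) hq.continuousOn
  have hu0 : u ≠ 0 := by rintro rfl; simp at hu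
  refine ⟨_, by simpa using hΩ.dotProduct_mulVec_pos hu0, fun v => ?_⟩
  rcases eq_or_ne v 0 with rfl | hv
  · simp
  have hv' : 0 < ‖v‖ := norm_pos_iff.2 hv
  have hnorm : ‖v‖⁻¹ • v ∈ Metric.sphere (0 : n → ℝ) 1 := by
    simp [norm_smul, hv'.ne']
  have huv : u ⬝ᵥ Ω *ᵥ u ≤ ‖v‖⁻¹ ^ 2 * (v ⬝ᵥ Ω *ᵥ v) := by
    simpa [mulVec_smul, sq, mul_assoc] using hmin hnorm
  calc u ⬝ᵥ Ω *ᵥ u * ‖v‖ ^ 2 ≤ ‖v‖⁻¹ ^ 2 * (v ⬝ᵥ Ω *ᵥ v) * ‖v‖ ^ 2 := by gcongr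
    _ = v ⬝ᵥ Ω *ᵥ v := by field_simp

theorem Matrix.PosDef.tendsto_cocompact_atTop {n : Type*} [Fintype n] {Ω : Matrix n n ℝ}
    (hΩ : Ω.PosDef) (π : n → ℝ) :
    Tendsto (fun x => (π - x) ⬝ᵥ Ω *ᵥ (π - x)) (cocompact _) atTop := by
  obtain ⟨c, hc, hcoer⟩ := hΩ.exists_pos_mul_sq_norm_le
  refine tendsto_atTop_mono (fun x => hcoer (π - x)) ?_
  simpa [dist_eq_norm] using
    ((tendsto_pow_atTop two_ne_zero).comp (tendsto_dist_left_cocompact_atTop π)).const_mul_atTop hc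

theorem sparse_minimizer_exists_general {m H : ℕ}
    (Ω : Matrix (Fin m) (Fin m) ℝ) (hpos : Ω.PosDef)
    (M : Matrix (Fin m) (Fin H) ℝ) (π : Fin m → ℝ) :
    ∃ ν : Fin H → ℝ, 0 ≤ ν ∧
      (∀ ν' : Fin H → ℝ, 0 ≤ ν' →
        (π - M.mulVec ν) ⬝ᵥ Ω.mulVec (π - M.mulVec ν) ≤
          (π - M.mulVec ν') ⬝ᵥ Ω.mulVec (π - M.mulVec ν')) ∧
      (Finset.univ.filter (fun i => ν i ≠ 0)).card ≤ m := by
  obtain ⟨_, ⟨ν₀, hν₀, rfl⟩, hmin⟩ :=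
    (by fun_prop : Continuous fun x => (π - x) ⬝ᵥ Ω *ᵥ (π - x)).continuousOn.exists_isMinOn'
      M.mulVecLin.isClosed_image_Ici_zero ⟨0, Set.mem_Ici.2 le_rfl, map_zero _⟩
      (((hpos.tendsto_cocompact_atTop π).eventually_ge_atTop _).filter_mono inf_le_left)
  obtain ⟨ν, hν, hMν, hinj⟩ := M.mulVecLin.exists_nonneg_injective_restrictSupport hν₀
  refine ⟨ν, hν, fun ν' hν' => ?_, ?_⟩
  · rw [← mulVecLin_apply, ← mulVecLin_apply, hMν]
    exact hmin ⟨ν', hν', rfl⟩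
  · simpa [Fintype.card_subtype] using LinearMap.finrank_le_finrank_of_injective hinj

/-- for a symmetric positive definite `Ω`, an `m × H` matrix `M` and
`π ∈ ℝ^m`, the minimum over `ν ≥ 0` of `(π − Mν)ᵀ Ω (π − Mν)` is attained, and is attained
at some `ν ≥ 0` with at most `m` nonzero coordinates (a sparse minimizer). -/
theorem sparse_minimizer_exists {m H : ℕ}
    (Ω : Matrix (Fin m) (Fin m) ℝ) (hsym : Ω.IsSymm) (hpos : Ω.PosDef)
    (M : Matrix (Fin m) (Fin H) ℝ) (π : Fin m → ℝ) :
    ∃ ν : Fin H → ℝ, 0 ≤ ν ∧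
      (∀ ν' : Fin H → ℝ, 0 ≤ ν' →
        (π - M.mulVec ν) ⬝ᵥ Ω.mulVec (π - M.mulVec ν) ≤
          (π - M.mulVec ν') ⬝ᵥ Ω.mulVec (π - M.mulVec ν')) ∧
      (Finset.univ.filter (fun i => ν i ≠ 0)).card ≤ m :=
  sparse_minimizer_exists_general Ω hpos M π
end
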